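/- Let G be a group with identity e and let (s₁,…,s_M) be a finite sequence of elements of G∖{e} generating G. Then for every function f:G→ℝ and every x∈G, Γ₂f(x) = (1/4)·∑_{i=1}^{M}∑_{j=1}^{M} (∂_i∂_j f(x))² + (1/2)·∑_{i=1}^{M}∑_{j=1}^{M} ∂_j f(x)·(∂_i∂_j f(x) − ∂_j∂_i f(x)). -/

import Mathlib

noncomputable section CayleyOps

variable {G : Type*} [Group G] {M : ℕ}

/-- `∂_i f (x) = f (x * sᵢ) - f x`. -/
def dOp (s : Fin M → G) (i : Fin M) (f : G → ℝ) (x : G) : ℝ := f (x * s i) - f x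

/-- `Δ f (x) = ∑_{i=1}^{M} ∂_i f (x)`. -/
def lapC (s : Fin M → G) (f : G → ℝ) (x : G) : ℝ := ∑ i, dOp s i f x

/-- `Γ f (x) = (1/2) ∑_{i=1}^{M} (∂_i f (x))²`. -/
def gammaC (s : Fin M → G) (f : G → ℝ) (x : G) : ℝ := (1 / 2) * ∑ i, (dOp s i f x) ^ 2

/-- `Γ(f,g)(x) = (1/2) ∑_{i=1}^{M} ∂_i f (x) ∂_i g (x)`. -/
def gammaBilC (s : Fin M → G) (f g : G → ℝ) (x : G) : ℝ :=
  (1 / 2) * ∑ i, dOp s i f x * dOp s i g x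

/-- `Γ₂ f = (1/2) Δ (Γ f) - Γ(f, Δ f)`. -/
def gamma2C (s : Fin M → G) (f : G → ℝ) (x : G) : ℝ :=
  (1 / 2) * lapC s (gammaC s f) x - gammaBilC s f (lapC s f) x

end CayleyOps

/-! Expanding `Δ (Γ f)` with the discrete Leibniz rule `∂ᵢ (g²) = (∂ᵢ g)² + 2 g ∂ᵢ g` and
`Γ(f, Δ f)` by linearity of `∂ⱼ` turns both sides into double sums over `(i, j)` that agree
termwise. -/

section CayleyCalculus

variable {G : Type*} [Group G] {M : ℕ} (s : Fin M → G)

lemma dOp_sum {ι : Type*} (i : Fin M) (t : Finset ι) (g : ι → G → ℝ) (x : G) :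
    dOp s i (fun y => ∑ j ∈ t, g j y) x = ∑ j ∈ t, dOp s i (g j) x := by
  simp only [dOp, Finset.sum_sub_distrib]

lemma dOp_const_mul (i : Fin M) (c : ℝ) (g : G → ℝ) (x : G) :
    dOp s i (fun y => c * g y) x = c * dOp s i g x := by
  simp only [dOp, mul_sub]

lemma dOp_sq (i : Fin M) (g : G → ℝ) (x : G) :
    dOp s i (fun y => g y ^ 2) x = dOp s i g x ^ 2 + 2 * g x * dOp s i g x := by
  simp only [dOp]
  ring

lemma dOp_lapC (j : Fin M) (f : G → ℝ) (x : G) :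
    dOp s j (lapC s f) x = ∑ i, dOp s j (dOp s i f) x :=
  dOp_sum s j Finset.univ (fun i => dOp s i f) x

lemma dOp_gammaC (i : Fin M) (f : G → ℝ) (x : G) :
    dOp s i (gammaC s f) x =
      (1 / 2) * ∑ j, (dOp s i (dOp s j f) x ^ 2 + 2 * dOp s j f x * dOp s i (dOp s j f) x) := by
  unfold gammaC
  simp only [dOp_const_mul, dOp_sum, dOp_sq]

lemma gammaBilC_lapC (f : G → ℝ) (x : G) :
    gammaBilC s f (lapC s f) x = (1 / 2) * ∑ i, ∑ j, dOp s j f x * dOp s j (dOp s i f) x := by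
  simp only [gammaBilC, dOp_lapC, Finset.mul_sum]
  rw [Finset.sum_comm]

end CayleyCalculus

theorem bochner_cayley_general {G : Type*} [Group G] {M : ℕ} (s : Fin M → G)
    (f : G → ℝ) (x : G) :
    gamma2C s f x =
      (1 / 4) * (∑ i, ∑ j, (dOp s i (dOp s j f) x) ^ 2) +
      (1 / 2) * ∑ i, ∑ j, dOp s j f x * (dOp s i (dOp s j f) x - dOp s j (dOp s i f) x) := by
  rw [gamma2C, lapC, gammaBilC_lapC]
  simp only [dOp_gammaC, Finset.mul_sum, ← Finset.sum_sub_distrib, ← Finset.sum_add_distrib]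
  refine Finset.sum_congr rfl fun i _ => Finset.sum_congr rfl fun j _ => ?_
  ring

/-- **Bochner formula on Cayley graphs.** For a group `G` generated by
a finite sequence `s₁, …, s_M` of elements of `G ∖ {e}`,
`Γ₂ f(x) = (1/4) ∑ᵢ∑ⱼ (∂ᵢ∂ⱼf(x))² + (1/2) ∑ᵢ∑ⱼ ∂ⱼf(x) (∂ᵢ∂ⱼf(x) - ∂ⱼ∂ᵢf(x))`. -/
theorem bochner_cayley {G : Type*} [Group G] {M : ℕ} (s : Fin M → G)
    (hs : ∀ i, s i ≠ 1) (hgen : Subgroup.closure (Set.range s) = ⊤)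
    (f : G → ℝ) (x : G) :
    gamma2C s f x =
      (1 / 4) * (∑ i, ∑ j, (dOp s i (dOp s j f) x) ^ 2) +
      (1 / 2) * ∑ i, ∑ j, dOp s j f x * (dOp s i (dOp s j f) x - dOp s j (dOp s i f) x) :=
  bochner_cayley_general s f x
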